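/- Let (P1, P2) ∈ Π(s1, t1) × Π(s2, t2) be a pair of shortest paths in the weighted DAG G that intersect (share at least one vertex). Then there exists a connected component B of the undirected graph obtained from (V, E_∩) by forgetting edge orientations such that V(P1) ∩ V(P2) ⊆ B. -/

import Mathlib

open scoped BigOperators

namespace DSP

variable {V : Type*} [Fintype V] [DecidableEq V]

/-- A path: a nonempty list of distinct vertices in which each consecutive
pair is joined by a directed edge. -/
def IsPath (E : V → V → Prop) (p : List V) : Prop :=
  p ≠ [] ∧ p.Nodup ∧ p.Chain' E

/-- A path from `x` to `y`. -/
def IsPathFrom (E : V → V → Prop) (p : List V) (x y : V) : Prop :=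
  IsPath E p ∧ p.head? = some x ∧ p.getLast? = some y

/-- The (ordered) list of edges of a path. -/
def pathEdges (p : List V) : List (V × V) := p.zip p.tail

/-- The weight of a path: the sum of its edge weights. -/
def pathWeight (ℓ : V → V → ℝ) (p : List V) : ℝ :=
  ((pathEdges p).map fun e => ℓ e.1 e.2).sum

/-- `dist x y` : the minimum weight of a path from `x` to `y`
(`⊤` if there is no such path). -/
noncomputable def dist (E : V → V → Prop) (ℓ : V → V → ℝ) (x y : V) : EReal :=
  sInf {w : EReal | ∃ p : List V, IsPathFrom E p x y ∧ (pathWeight ℓ p : EReal) = w}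

/-- A shortest path from `x` to `y` : a path from `x` to `y` whose weight
equals `dist x y`.  `Π(x, y)` is the set of all such paths. -/
def IsShortestPath (E : V → V → Prop) (ℓ : V → V → ℝ) (p : List V) (x y : V) : Prop :=
  IsPathFrom E p x y ∧ (pathWeight ℓ p : EReal) = dist E ℓ x y

/-- A directed cycle: a closed walk with at least one edge whose internal
vertices are pairwise distinct. -/
def IsCycle (E : V → V → Prop) (p : List V) : Prop :=
  2 ≤ p.length ∧ p.Chain' E ∧ p.head? = p.getLast? ∧ p.tail.Nodup

/-- `G` contains no directed cycle of negative or zero total weight. -/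
def NoNonposCycle (E : V → V → Prop) (ℓ : V → V → ℝ) : Prop :=
  ∀ p : List V, IsCycle E p → 0 < pathWeight ℓ p

/-- `G` is a DAG: it contains no directed cycle. -/
def Acyclic (E : V → V → Prop) : Prop :=
  ∀ p : List V, ¬ IsCycle E p

/-- `x` precedes `y` on the path `p` (`x = y` allowed). -/
def Precedes (p : List V) (x y : V) : Prop :=
  x ∈ p ∧ y ∈ p ∧ p.idxOf x ≤ p.idxOf y

/-- `subpath p x y` : the subpath `p[x, y]` of `p` from `x` to `y`
(for `x` preceding `y` on `p`). -/
def subpath (p : List V) (x y : V) : List V :=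
  (p.take (p.idxOf y + 1)).drop (p.idxOf x)

/-- Concatenation `p · q` of two paths (the last vertex of `p` coinciding
with the first vertex of `q`). -/
def pathConcat (p q : List V) : List V := p ++ q.tail

/-- A vertex is internal to a path if it lies on it and is not an endpoint. -/
def Internal (p : List V) (v : V) : Prop :=
  v ∈ p ∧ p.head? ≠ some v ∧ p.getLast? ≠ some v

/-- Paths `p1` from `x1` to `y1` and `p2` from `x2` to `y2` are internally
vertex-disjoint: they share no vertices except possibly those in
`{x1, y1} ∩ {x2, y2}`. -/
def InternallyDisjoint (p1 : List V) (x1 y1 : V) (p2 : List V) (x2 y2 : V) : Prop :=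
  ∀ u, u ∈ p1 → u ∈ p2 → u ∈ ({x1, y1} ∩ {x2, y2} : Set V)

/-- `(a, b)` is a twin-crossing pair for paths `p1`, `p2`. -/
def TwinCrossingPair (p1 p2 : List V) (a b : V) : Prop :=
  a ≠ b ∧ Precedes p1 a b ∧ Precedes p2 a b ∧ subpath p1 a b ≠ subpath p2 a b

/-- The swap operation `φ_{a,b}(P1, P2)`. -/
def swap (p1 : List V) (x1 y1 : V) (p2 : List V) (x2 y2 : V) (a b : V) :
    List V × List V :=
  (pathConcat (pathConcat (subpath p1 x1 a) (subpath p2 a b)) (subpath p1 b y1),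
   pathConcat (pathConcat (subpath p2 x2 a) (subpath p1 a b)) (subpath p2 b y2))

/-- The graph with vertex `u` deleted. -/
def deleteVertex (E : V → V → Prop) (u : V) : V → V → Prop :=
  fun a b => E a b ∧ a ≠ u ∧ b ≠ u

/-- `u` is distance-critical for `(x, y)` : deleting `u` strictly increases
the distance from `x` to `y`. -/
def DistCritical (E : V → V → Prop) (ℓ : V → V → ℝ) (x y u : V) : Prop :=
  dist E ℓ x y < dist (deleteVertex E u) ℓ x y

/-- `Δ(x, y)` : the distance-critical vertices for `(x, y)` together with the
endpoints `x`, `y`. -/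
def Delta (E : V → V → Prop) (ℓ : V → V → ℝ) (x y : V) : Set V :=
  {u | DistCritical E ℓ x y u} ∪ {x, y}

/-- `δ(x, y) = |Δ(x, y)|`. -/
noncomputable def deltaCard (E : V → V → Prop) (ℓ : V → V → ℝ) (x y : V) : ℕ :=
  (Delta E ℓ x y).ncard

/-- `(a, b)` is a concordant pair for paths `p1` (from `x1` to `y1`) and
`p2` (from `x2` to `y2`). -/
def ConcordantPair (p1 : List V) (x1 y1 : V) (p2 : List V) (x2 y2 : V) (a b : V) : Prop :=
  a ∉ ({x1, y1} ∩ {x2, y2} : Set V) ∧ b ∉ ({x1, y1} ∩ {x2, y2} : Set V) ∧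
  Precedes p1 a b ∧ Precedes p2 a b ∧
  InternallyDisjoint (subpath p1 x1 a) x1 a (subpath p2 x2 a) x2 a ∧
  InternallyDisjoint (subpath p1 b y1) b y1 (subpath p2 b y2) b y2

/-- `𝒞(P1, P2)` : the set of concordant pairs for `(P1, P2)`. -/
def concordantSet (p1 : List V) (x1 y1 : V) (p2 : List V) (x2 y2 : V) : Set (V × V) :=
  {c | ConcordantPair p1 x1 y1 p2 x2 y2 c.1 c.2}

/-- The interaction complexity `γ(P1, P2) = Σ_{(v,w) ∈ 𝒞(P1,P2)} δ(v, w)`. -/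
noncomputable def gamma (E : V → V → Prop) (ℓ : V → V → ℝ)
    (p1 : List V) (x1 y1 : V) (p2 : List V) (x2 y2 : V) : ℕ :=
  ∑ᶠ c ∈ concordantSet p1 x1 y1 p2 x2 y2, deltaCard E ℓ c.1 c.2

/-- `E(x, y)` : the set of edges lying on at least one shortest path
from `x` to `y`. -/
def shortestEdges (E : V → V → Prop) (ℓ : V → V → ℝ) (x y : V) : Set (V × V) :=
  {e | ∃ p : List V, IsShortestPath E ℓ p x y ∧ e ∈ pathEdges p}

section Poly

variable (F : Type*) [Field F] [CharP F 2]

/-- The monomial `f(P) = ∏_{e ∈ E(P)} z_e` of a path. -/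
noncomputable def pathMon (p : List V) : MvPolynomial (V × V) F :=
  ((pathEdges p).map fun e => MvPolynomial.X e).prod

/-- The enumerating polynomial of a collection of paths. -/
noncomputable def enumPoly (S : Set (List V)) : MvPolynomial (V × V) F :=
  ∑ᶠ p ∈ S, pathMon F p

/-- The enumerating polynomial of a collection of pairs of paths. -/
noncomputable def enumPoly2 (S : Set (List V × List V)) : MvPolynomial (V × V) F :=
  ∑ᶠ q ∈ S, pathMon F q.1 * pathMon F q.2

variable (E : V → V → Prop) (ℓ : V → V → ℝ)

/-- `F(x, y)` : the enumerating polynomial of `Π(x, y)`. -/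
noncomputable def Fpoly (x y : V) : MvPolynomial (V × V) F :=
  enumPoly F {p : List V | IsShortestPath E ℓ p x y}

end Poly

variable (E : V → V → Prop) (ℓ : V → V → ℝ)

/-- The collection of internally vertex-disjoint pairs
`(P1, P2) ∈ Π(x1, y1) × Π(x2, y2)`. -/
def disjPairs (x1 y1 x2 y2 : V) : Set (List V × List V) :=
  {q | IsShortestPath E ℓ q.1 x1 y1 ∧ IsShortestPath E ℓ q.2 x2 y2 ∧
       InternallyDisjoint q.1 x1 y1 q.2 x2 y2}

/-- Pairs `(P1, P2) ∈ Π(x1, y1) × Π(x2, y2)` such that `v ∈ V(P1) ∩ V(P2)`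
and the prefix `P1[x1, v]` and the suffix `P2[v, y2]` are internally
vertex-disjoint (defining `H_v`). -/
def HvPairs (v x1 y1 x2 y2 : V) : Set (List V × List V) :=
  {q | IsShortestPath E ℓ q.1 x1 y1 ∧ IsShortestPath E ℓ q.2 x2 y2 ∧
       v ∈ q.1 ∧ v ∈ q.2 ∧
       InternallyDisjoint (subpath q.1 x1 v) x1 v (subpath q.2 v y2) v y2}

/-- Pairs `(P1, P2) ∈ Π(x1, y1) × Π(x2, y2)` such that
`(a, v) ∈ E(P1) ∩ E(P2)` and the prefix `P1[x1, a]` and the suffix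
`P2[v, y2]` are internally vertex-disjoint (defining `H_{av}`). -/
def HavPairs (a v x1 y1 x2 y2 : V) : Set (List V × List V) :=
  {q | IsShortestPath E ℓ q.1 x1 y1 ∧ IsShortestPath E ℓ q.2 x2 y2 ∧
       (a, v) ∈ pathEdges q.1 ∧ (a, v) ∈ pathEdges q.2 ∧
       InternallyDisjoint (subpath q.1 x1 a) x1 a (subpath q.2 v y2) v y2}

/-- Pairs `(P1, P2) ∈ Π(x1, y1) × Π(x2, y2)` such that `v ∈ V(P1) ∩ V(P2)`
and the prefix `P1[x1, v]` is internally vertex-disjoint from both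
`P2[x2, v]` and `P2[v, y2]` (defining `D_v`). -/
def DvPairs (v x1 y1 x2 y2 : V) : Set (List V × List V) :=
  {q | IsShortestPath E ℓ q.1 x1 y1 ∧ IsShortestPath E ℓ q.2 x2 y2 ∧
       v ∈ q.1 ∧ v ∈ q.2 ∧
       InternallyDisjoint (subpath q.1 x1 v) x1 v (subpath q.2 x2 v) x2 v ∧
       InternallyDisjoint (subpath q.1 x1 v) x1 v (subpath q.2 v y2) v y2}

/-- Pairs `(P1, P2) ∈ Π(x1, y1) × Π(x2, y2)` with interaction complexity
`γ(P1, P2) ≤ k` (defining `F_{disj,k}`). -/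
def disjkPairs (k : ℤ) (x1 y1 x2 y2 : V) : Set (List V × List V) :=
  {q | IsShortestPath E ℓ q.1 x1 y1 ∧ IsShortestPath E ℓ q.2 x2 y2 ∧
       (gamma E ℓ q.1 x1 y1 q.2 x2 y2 : ℤ) ≤ k}

/-- Pairs `(P1, P2) ∈ Π(x1, y1) × Π(x2, y2)` with `γ(P1, P2) ≤ k` such that
`(v, w) ∈ 𝒞(P1, P2)` and `(v, w)` is the concordant pair appearing first
along `P1` (defining `D_{v,w,k}`). -/
def DvwkPairs (k : ℤ) (v w x1 y1 x2 y2 : V) : Set (List V × List V) :=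
  {q | IsShortestPath E ℓ q.1 x1 y1 ∧ IsShortestPath E ℓ q.2 x2 y2 ∧
       (gamma E ℓ q.1 x1 y1 q.2 x2 y2 : ℤ) ≤ k ∧
       (v, w) ∈ concordantSet q.1 x1 y1 q.2 x2 y2 ∧
       ∀ c ∈ concordantSet q.1 x1 y1 q.2 x2 y2, q.1.idxOf v ≤ q.1.idxOf c.1}

/-- Pairs `(P1, P2) ∈ Π(x1, y1) × Π(x2, y2)` such that `v` and `w` lie on
both paths with `v` preceding `w` on both, the subpaths `P1[x1, v]` and
`P2[w, y2]` are internally vertex-disjoint, and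
`γ(P1[v, y1], P2[x2, w]) ≤ k` (defining `H_{v,w,k}`). -/
def HvwkPairs (k : ℤ) (v w x1 y1 x2 y2 : V) : Set (List V × List V) :=
  {q | IsShortestPath E ℓ q.1 x1 y1 ∧ IsShortestPath E ℓ q.2 x2 y2 ∧
       Precedes q.1 v w ∧ Precedes q.2 v w ∧
       InternallyDisjoint (subpath q.1 x1 v) x1 v (subpath q.2 w y2) w y2 ∧
       (gamma E ℓ (subpath q.1 v y1) v y1 (subpath q.2 x2 w) x2 w : ℤ) ≤ k}

/-- As `HvwkPairs`, additionally requiring the edge `(a, v)` on both paths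
(disjointness imposed on `P1[x1, a]` and `P2[w, y2]`), defining `H_{av,w,k}`. -/
def HavwkPairs (k : ℤ) (a v w x1 y1 x2 y2 : V) : Set (List V × List V) :=
  {q | IsShortestPath E ℓ q.1 x1 y1 ∧ IsShortestPath E ℓ q.2 x2 y2 ∧
       Precedes q.1 v w ∧ Precedes q.2 v w ∧
       (a, v) ∈ pathEdges q.1 ∧ (a, v) ∈ pathEdges q.2 ∧
       InternallyDisjoint (subpath q.1 x1 a) x1 a (subpath q.2 w y2) w y2 ∧
       (gamma E ℓ (subpath q.1 v y1) v y1 (subpath q.2 x2 w) x2 w : ℤ) ≤ k}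

/-- As `HvwkPairs`, additionally requiring the edge `(w, b)` on both paths
(disjointness imposed on `P1[x1, v]` and `P2[b, y2]`), defining `H_{v,wb,k}`. -/
def HvwbkPairs (k : ℤ) (v w b x1 y1 x2 y2 : V) : Set (List V × List V) :=
  {q | IsShortestPath E ℓ q.1 x1 y1 ∧ IsShortestPath E ℓ q.2 x2 y2 ∧
       Precedes q.1 v w ∧ Precedes q.2 v w ∧
       (w, b) ∈ pathEdges q.1 ∧ (w, b) ∈ pathEdges q.2 ∧
       InternallyDisjoint (subpath q.1 x1 v) x1 v (subpath q.2 b y2) b y2 ∧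
       (gamma E ℓ (subpath q.1 v y1) v y1 (subpath q.2 x2 w) x2 w : ℤ) ≤ k}

/-- As `HvwkPairs`, additionally requiring both edges `(a, v)` and `(w, b)`
on both paths (disjointness imposed on `P1[x1, a]` and `P2[b, y2]`),
defining `H_{av,wb,k}`. -/
def HavwbkPairs (k : ℤ) (a v w b x1 y1 x2 y2 : V) : Set (List V × List V) :=
  {q | IsShortestPath E ℓ q.1 x1 y1 ∧ IsShortestPath E ℓ q.2 x2 y2 ∧
       Precedes q.1 v w ∧ Precedes q.2 v w ∧
       (a, v) ∈ pathEdges q.1 ∧ (a, v) ∈ pathEdges q.2 ∧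
       (w, b) ∈ pathEdges q.1 ∧ (w, b) ∈ pathEdges q.2 ∧
       InternallyDisjoint (subpath q.1 x1 a) x1 a (subpath q.2 b y2) b y2 ∧
       (gamma E ℓ (subpath q.1 v y1) v y1 (subpath q.2 x2 w) x2 w : ℤ) ≤ k}


/-! If `a` and `b` lie on both `P1` and `P2`, acyclicity forces them to occur in the same order
on both paths. Exchanging the segments of `P1` and `P2` between `a` and `b` then yields two walks,
hence two paths since `G` is a DAG, of the same total weight as `P1` and `P2`. Each is at least
as heavy as the distance it realises, so both are shortest: `P1[a, b]` lies on a shortest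
`s2`–`t2` path, and its edges join `a` to `b` inside `E_∩`. -/

section Lists

open List

variable {α : Type*}

theorem exists_eq_append_cons_append_cons_of_pair_sublist {l : List α} {a b : α}
    (h : [a, b] <+ l) : ∃ s m u, l = s ++ a :: m ++ b :: u := by
  obtain ⟨r₁, r₂, rfl, ha, hb⟩ := cons_sublist_iff.mp h
  obtain ⟨s, m, rfl⟩ := append_of_mem ha
  obtain ⟨m', u, rfl⟩ := append_of_mem (singleton_sublist.mp hb)
  exact ⟨s, m ++ m', u, by simp⟩

theorem pair_sublist_or_pair_sublist_of_mem {l : List α} {a b : α} (ha : a ∈ l) (hb : b ∈ l)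
    (hab : a ≠ b) : [a, b] <+ l ∨ [b, a] <+ l := by
  obtain ⟨s, t, rfl⟩ := append_of_mem ha
  rcases mem_append.mp hb with hb | hb
  · exact .inr ((singleton_sublist.mpr hb).append (singleton_sublist.mpr mem_cons_self))
  · have hb : b ∈ t := (mem_cons.mp hb).resolve_left hab.symm
    exact .inl ((cons_sublist_cons.mpr (singleton_sublist.mpr hb)).trans (sublist_append_right s _))

theorem mem_pathEdges_iff {l : List α} {c d : α} : (c, d) ∈ pathEdges l ↔ [c, d] <:+: l := by
  match l with
  | [] => simp [pathEdges]
  | [x] => simpa [pathEdges] using fun h : [c, d] <:+: [x] => by simpa using h.length_le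
  | x :: y :: l =>
    rw [show pathEdges (x :: y :: l) = (x, y) :: pathEdges (y :: l) from rfl, mem_cons,
      mem_pathEdges_iff, infix_cons_iff (a := x)]
    simp

theorem pathWeight_cons_cons (ℓ : α → α → ℝ) (x y : α) (l : List α) :
    pathWeight ℓ (x :: y :: l) = ℓ x y + pathWeight ℓ (y :: l) := by
  simp [pathWeight, pathEdges]

theorem pathWeight_append_cons (ℓ : α → α → ℝ) (s : List α) (x : α) (t : List α) :
    pathWeight ℓ (s ++ x :: t) = pathWeight ℓ (s ++ [x]) + pathWeight ℓ (x :: t) := by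
  induction s with
  | nil => simp [pathWeight, pathEdges]
  | cons y s ih =>
    cases s with
    | nil => simp [pathWeight, pathEdges]
    | cons z s => simp only [cons_append, pathWeight_cons_cons] at ih ⊢; rw [ih, add_assoc]

theorem isChain_append_cons_append_cons_iff {E : α → α → Prop} {s m u : List α} {a b : α} :
    (s ++ a :: m ++ b :: u).IsChain E ↔
      (s ++ [a]).IsChain E ∧ (a :: m ++ [b]).IsChain E ∧ (b :: u).IsChain E := by
  rw [isChain_split, append_assoc, cons_append, isChain_split (l₁ := s), and_assoc]

theorem pathWeight_append_cons_append_cons (ℓ : α → α → ℝ) (s m u : List α) (a b : α) :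
    pathWeight ℓ (s ++ a :: m ++ b :: u) =
      pathWeight ℓ (s ++ [a]) + pathWeight ℓ (a :: m ++ [b]) + pathWeight ℓ (b :: u) := by
  rw [pathWeight_append_cons ℓ (s ++ a :: m) b u, append_assoc, cons_append,
    pathWeight_append_cons ℓ s a (m ++ [b])]

theorem pathWeight_exchange (ℓ : α → α → ℝ) (s m u s' m' u' : List α) (a b : α) :
    pathWeight ℓ (s ++ a :: m' ++ b :: u) + pathWeight ℓ (s' ++ a :: m ++ b :: u') =
      pathWeight ℓ (s ++ a :: m ++ b :: u) + pathWeight ℓ (s' ++ a :: m' ++ b :: u') := by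
  simp only [pathWeight_append_cons_append_cons]
  ring

end Lists

section Acyclic

open List Relation

variable {α : Type*} {E : α → α → Prop}

theorem transGen_of_pair_sublist {l : List α} (hl : l.IsChain E) {a b : α} (h : [a, b] <+ l) :
    TransGen E a b := by
  have hpw : l.Pairwise (TransGen E) := isChain_iff_pairwise.mp (hl.imp fun _ _ => .single)
  simpa using hpw.sublist h

theorem Acyclic.nodup_of_isChain (hE : Acyclic E) {l : List α} (hl : l.IsChain E) : l.Nodup := by
  induction h : l.length using Nat.strong_induction_on generalizing l with
  | _ n ih =>
  subst h
  -- a repeated vertex `v` closes the cycle `v :: t ++ [v]`, whose tail is a shorter walk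
  refine nodup_iff_sublist.mpr fun v hv => ?_
  obtain ⟨s, t, u, rfl⟩ := exists_eq_append_cons_append_cons_of_pair_sublist hv
  have hcyc : v :: t ++ [v] <:+: s ++ v :: t ++ v :: u := ⟨s, u, by simp⟩
  have htail : t ++ [v] <:+: v :: t ++ [v] := (suffix_cons v _).isInfix
  exact hE (v :: t ++ [v]) ⟨by simp, hl.infix hcyc, by rw [getLast?_concat]; rfl,
    ih _ (by simp; omega) ((hl.infix hcyc).infix htail) rfl⟩

theorem Acyclic.not_transGen_self (hE : Acyclic E) (v : α) : ¬ TransGen E v v := by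
  intro h
  obtain ⟨w, hvw, hwv⟩ := TransGen.head'_iff.mp h
  obtain ⟨l, hl, hlast⟩ := exists_isChain_cons_of_relationReflTransGen hwv
  have hnd := hE.nodup_of_isChain (isChain_cons_cons.mpr ⟨hvw, hl⟩)
  exact (nodup_cons.mp hnd).1 (hlast ▸ getLast_mem _)

theorem Acyclic.pair_sublist_of_mem (hE : Acyclic E) {l l' : List α} (hl : l.IsChain E)
    (hl' : l'.IsChain E) {a b : α} (hab : [a, b] <+ l) (ha : a ∈ l') (hb : b ∈ l') :
    [a, b] <+ l' := by
  have hab_rel := transGen_of_pair_sublist hl hab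
  have hne : a ≠ b := by rintro rfl; exact hE.not_transGen_self a hab_rel
  refine (pair_sublist_or_pair_sublist_of_mem ha hb hne).resolve_right fun hba => ?_
  exact hE.not_transGen_self a (hab_rel.trans (transGen_of_pair_sublist hl' hba))

theorem Acyclic.isPathFrom_splice (hE : Acyclic E) {s m u m' : List α} {a b x y : α}
    (hP : IsPathFrom E (s ++ a :: m ++ b :: u) x y) (hM : (a :: m' ++ [b]).IsChain E) :
    IsPathFrom E (s ++ a :: m' ++ b :: u) x y := by
  obtain ⟨⟨-, -, hch⟩, hx, hy⟩ := hP
  obtain ⟨hs, -, hu⟩ := isChain_append_cons_append_cons_iff.mp hch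
  have hchain : (s ++ a :: m' ++ b :: u).IsChain E :=
    isChain_append_cons_append_cons_iff.mpr ⟨hs, hM, hu⟩
  refine ⟨⟨by simp, hE.nodup_of_isChain hchain, hchain⟩, ?_, ?_⟩
  · rw [← hx]; cases s <;> simp
  · rw [← hy, getLast?_append_cons, getLast?_append_cons]

end Acyclic

section ShortestPaths

open List Relation

variable {α : Type*} {E : α → α → Prop} {ℓ : α → α → ℝ}

theorem IsShortestPath.pathWeight_le {P Q : List α} {x y : α} (hP : IsShortestPath E ℓ P x y)
    (hQ : IsPathFrom E Q x y) : pathWeight ℓ P ≤ pathWeight ℓ Q :=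
  EReal.coe_le_coe_iff.mp (hP.2 ▸ sInf_le ⟨Q, hQ, rfl⟩)

theorem IsShortestPath.of_pathWeight_le {P Q : List α} {x y : α} (hP : IsShortestPath E ℓ P x y)
    (hQ : IsPathFrom E Q x y) (hle : pathWeight ℓ Q ≤ pathWeight ℓ P) :
    IsShortestPath E ℓ Q x y :=
  ⟨hQ, by rw [le_antisymm hle (hP.pathWeight_le hQ), hP.2]⟩

theorem Acyclic.isShortestPath_exchange (hE : Acyclic E) {p₁ m₁ q₁ p₂ m₂ q₂ : List α}
    {a b x₁ y₁ x₂ y₂ : α} (h₁ : IsShortestPath E ℓ (p₁ ++ a :: m₁ ++ b :: q₁) x₁ y₁)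
    (h₂ : IsShortestPath E ℓ (p₂ ++ a :: m₂ ++ b :: q₂) x₂ y₂) :
    IsShortestPath E ℓ (p₂ ++ a :: m₁ ++ b :: q₂) x₂ y₂ := by
  have hM₁ := (isChain_append_cons_append_cons_iff.mp h₁.1.1.2.2).2.1
  have hM₂ := (isChain_append_cons_append_cons_iff.mp h₂.1.1.2.2).2.1
  have hQ₁ := hE.isPathFrom_splice h₁.1 hM₂
  have hQ₂ := hE.isPathFrom_splice h₂.1 hM₁
  refine h₂.of_pathWeight_le hQ₂ ?_
  linarith [h₁.pathWeight_le hQ₁, pathWeight_exchange ℓ p₂ m₂ q₂ p₁ m₁ q₁ a b]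

theorem reflTransGen_shortestEdges_inter_of_pair_sublist (hE : Acyclic E) {P₁ P₂ : List α}
    {s₁ t₁ s₂ t₂ a b : α} (h₁ : IsShortestPath E ℓ P₁ s₁ t₁) (h₂ : IsShortestPath E ℓ P₂ s₂ t₂)
    (hab : [a, b] <+ P₁) (ha : a ∈ P₂) (hb : b ∈ P₂) :
    ReflTransGen (fun c d => (c, d) ∈ shortestEdges E ℓ s₁ t₁ ∩ shortestEdges E ℓ s₂ t₂) a b := by
  have hab₂ := hE.pair_sublist_of_mem h₁.1.1.2.2 h₂.1.1.2.2 hab ha hb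
  obtain ⟨p₁, m₁, q₁, rfl⟩ := exists_eq_append_cons_append_cons_of_pair_sublist hab
  obtain ⟨p₂, m₂, q₂, rfl⟩ := exists_eq_append_cons_append_cons_of_pair_sublist hab₂
  have hQ₂ := hE.isShortestPath_exchange h₁ h₂
  have hseg : ∀ p q, a :: m₁ ++ [b] <:+: p ++ a :: m₁ ++ b :: q := fun p q => ⟨p, q, by simp⟩
  refine relationReflTransGen_of_exists_isChain_cons (m₁ ++ [b]) ?_ (by simp)
  refine isChain_iff_forall_rel_of_append_cons_cons.mpr fun c d l₁ l₂ h => ?_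
  have hcd : [c, d] <:+: a :: m₁ ++ [b] := ⟨l₁, l₂, by simp [h]⟩
  exact ⟨⟨_, h₁, mem_pathEdges_iff.mpr (hcd.trans (hseg _ _))⟩,
    ⟨_, hQ₂, mem_pathEdges_iff.mpr (hcd.trans (hseg _ _))⟩⟩

end ShortestPaths

/-- In a weighted DAG, if `(P1, P2) ∈ Π(s1, t1) × Π(s2, t2)`
intersect, then there is a connected component `B` of the undirected graph
obtained from `(V, E_∩)` by forgetting orientations with
`V(P1) ∩ V(P2) ⊆ B`. -/
theorem intersection_within_single_component
    (hdag : Acyclic E) (s1 t1 s2 t2 : V) (P1 P2 : List V)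
    (h1 : IsShortestPath E ℓ P1 s1 t1) (h2 : IsShortestPath E ℓ P2 s2 t2)
    (hint : ∃ u, u ∈ P1 ∧ u ∈ P2) :
    ∃ B : Set V,
      (∃ u : V, B = {z : V | Relation.ReflTransGen (fun c d =>
          (c, d) ∈ shortestEdges E ℓ s1 t1 ∩ shortestEdges E ℓ s2 t2 ∨
          (d, c) ∈ shortestEdges E ℓ s1 t1 ∩ shortestEdges E ℓ s2 t2) u z}) ∧
      ∀ z, z ∈ P1 → z ∈ P2 → z ∈ B := by
  obtain ⟨u, hu1, hu2⟩ := hint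
  refine ⟨_, ⟨u, rfl⟩, fun z hz1 hz2 => ?_⟩
  rcases eq_or_ne u z with rfl | huz
  · exact .refl
  rcases pair_sublist_or_pair_sublist_of_mem hu1 hz1 huz with huz | hzu
  · exact Relation.ReflTransGen.mono (fun _ _ => Or.inl) _ _
      (reflTransGen_shortestEdges_inter_of_pair_sublist hdag h1 h2 huz hu2 hz2)
  · exact Relation.ReflTransGen.mono (fun _ _ => Or.inr) _ _
      (reflTransGen_shortestEdges_inter_of_pair_sublist hdag h1 h2 hzu hz2 hu2).swap

end DSP
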